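/- Say a state s ∈ S is controllable (with respect to τ, ι, γ) if there exist policies π and π' such that ∑_{t=1}^∞ γ^t (ι P_π^t)(s) ≠ ∑_{t=1}^∞ γ^t (ι P_{π'}^t)(s). Then there exists a controllable state if and only if τ is non-trivial, i.e., if and only if there exist s ∈ S and a, a' ∈ A with τ(s,a) ≠ τ(s,a'). -/
import Mathlib


open scoped BigOperators

/-- A probability vector on a finite type. -/
def IsProbVec {X : Type} [Fintype X] (p : X → ℝ) : Prop :=
  (∀ x, 0 ≤ p x) ∧ ∑ x, p x = 1

/-- A (stationary) policy: a probability vector over actions for each state. -/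
def Policy (S A : Type) [Fintype A] : Type :=
  {p : S → A → ℝ // ∀ s, IsProbVec (p s)}

/-- The transition matrix `P_π` induced by a policy `π` under transition function `τ`. -/
noncomputable def Pmat {S A : Type} [Fintype S] [Fintype A]
    (τ : S → A → S → ℝ) (π : Policy S A) : Matrix S S ℝ :=
  Matrix.of fun s s' => ∑ a, π.1 s a * τ s a s'

/-- The state distribution `ι P_π^t` at time `t`. -/
noncomputable def stateDist {S A : Type} [Fintype S] [DecidableEq S] [Fintype A]
    (τ : S → A → S → ℝ) (ι : S → ℝ) (π : Policy S A) (t : ℕ) : S → ℝ :=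
  Matrix.vecMul ι (Pmat τ π ^ t)

/-- The expected one-step reward `r_{R,π}`. -/
noncomputable def rvec {S A : Type} [Fintype S] [Fintype A]
    (τ : S → A → S → ℝ) (R : S → A → S → ℝ) (π : Policy S A) (s : S) : ℝ :=
  ∑ a, π.1 s a * ∑ s', τ s a s' * R s a s'

/-- The policy evaluation function `J_R(π)`. -/
noncomputable def Jval {S A : Type} [Fintype S] [DecidableEq S] [Fintype A]
    (τ : S → A → S → ℝ) (ι : S → ℝ) (γ : ℝ) (R : S → A → S → ℝ)
    (π : Policy S A) : ℝ :=
  ∑' t : ℕ, γ ^ t * ∑ s, stateDist τ ι π t s * rvec τ R π s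

/-- Every state is reachable under `τ` and `ι`. -/
def AllReachable {S A : Type} [Fintype S] [DecidableEq S] [Fintype A]
    (τ : S → A → S → ℝ) (ι : S → ℝ) : Prop :=
  ∀ s : S, ∃ (π : Policy S A) (t : ℕ), 0 < stateDist τ ι π t s

/-- `π` is an optimal policy for `R`. -/
def IsOptimal {S A : Type} [Fintype S] [DecidableEq S] [Fintype A]
    (τ : S → A → S → ℝ) (ι : S → ℝ) (γ : ℝ) (R : S → A → S → ℝ)
    (π : Policy S A) : Prop :=
  ∀ π' : Policy S A, Jval τ ι γ R π' ≤ Jval τ ι γ R π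

/-- `R₁ ≡_OPT R₂`: the same policies are optimal for `R₁` and `R₂`. -/
def EquivOPT {S A : Type} [Fintype S] [DecidableEq S] [Fintype A]
    (τ : S → A → S → ℝ) (ι : S → ℝ) (γ : ℝ) (R₁ R₂ : S → A → S → ℝ) : Prop :=
  ∀ π : Policy S A, IsOptimal τ ι γ R₁ π ↔ IsOptimal τ ι γ R₂ π

/-- `R₁ ≡_ORD R₂`: `R₁` and `R₂` induce the same ordering of policies. -/
def EquivORD {S A : Type} [Fintype S] [DecidableEq S] [Fintype A]
    (τ : S → A → S → ℝ) (ι : S → ℝ) (γ : ℝ) (R₁ R₂ : S → A → S → ℝ) : Prop :=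
  ∀ π π' : Policy S A,
    (Jval τ ι γ R₁ π' < Jval τ ι γ R₁ π ↔ Jval τ ι γ R₂ π' < Jval τ ι γ R₂ π)

/-- `f` is `P`-admissible: `f R₁ = f R₂` implies `P R₁ R₂`. -/
def PAdmissible {R : Type*} {X : Type*} (P : R → R → Prop) (f : R → X) : Prop :=
  ∀ R₁ R₂ : R, f R₁ = f R₂ → P R₁ R₂

/-- `f` is `P`-robust to misspecification with `g`. -/
def PRobust {R : Type*} {X : Type*} (P : R → R → Prop) (f g : R → X) : Prop :=
  PAdmissible P f ∧ f ≠ g ∧ Set.range g ⊆ Set.range f ∧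
    ∀ R₁ R₂ : R, f R₁ = g R₂ → P R₁ R₂

section Aux
variable {S A : Type} [Fintype S] [DecidableEq S] [Fintype A]
variable (τ : S → A → S → ℝ) (ι : S → ℝ) (π : Policy S A)

lemma pmat_nonneg (hτ : ∀ s a, IsProbVec (τ s a)) (s s' : S) : 0 ≤ Pmat τ π s s' :=
  Finset.sum_nonneg fun a _ => mul_nonneg ((π.2 s).1 a) ((hτ s a).1 s')

lemma pmat_row_sum (hτ : ∀ s a, IsProbVec (τ s a)) (s : S) :
    ∑ s', Pmat τ π s s' = 1 := by
  simp only [Pmat, Matrix.of_apply]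
  rw [Finset.sum_comm]
  have : ∀ a : A, ∑ s', π.1 s a * τ s a s' = π.1 s a := by
    intro a; rw [← Finset.mul_sum, (hτ s a).2, mul_one]
  simp only [this, (π.2 s).2]

lemma stateDist_zero : stateDist τ ι π 0 = ι := by
  simp [stateDist]

lemma stateDist_succ (t : ℕ) (s' : S) :
    stateDist τ ι π (t + 1) s' = ∑ s, stateDist τ ι π t s * Pmat τ π s s' := by
  simp only [stateDist, pow_succ, ← Matrix.vecMul_vecMul]
  simp [Matrix.vecMul, dotProduct]

lemma stateDist_prob (hτ : ∀ s a, IsProbVec (τ s a)) (hι : IsProbVec ι) (t : ℕ) :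
    IsProbVec (stateDist τ ι π t) := by
  induction t with
  | zero => rw [stateDist_zero]; exact hι
  | succ t ih =>
    constructor
    · intro s'
      rw [stateDist_succ]
      exact Finset.sum_nonneg fun s _ => mul_nonneg (ih.1 s) (pmat_nonneg τ π hτ s s')
    · simp only [stateDist_succ]
      rw [Finset.sum_comm]
      have : ∀ s : S, ∑ s', stateDist τ ι π t s * Pmat τ π s s' = stateDist τ ι π t s := by
        intro s; rw [← Finset.mul_sum, pmat_row_sum τ π hτ, mul_one]
      simp only [this, ih.2]

lemma stateDist_le_one (hτ : ∀ s a, IsProbVec (τ s a)) (hι : IsProbVec ι) (t : ℕ) (s : S) :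
    stateDist τ ι π t s ≤ 1 := by
  have h := stateDist_prob τ ι π hτ hι t
  calc stateDist τ ι π t s ≤ ∑ s', stateDist τ ι π t s' :=
        Finset.single_le_sum (fun s' _ => h.1 s') (Finset.mem_univ s)
    _ = 1 := h.2

lemma summable_aux (hτ : ∀ s a, IsProbVec (τ s a)) (hι : IsProbVec ι)
    {γ : ℝ} (hγ0 : 0 < γ) (hγ1 : γ < 1) (k : ℕ) (s : S) :
    Summable (fun t => γ ^ (t + 1) * stateDist τ ι π (t + k) s) := by
  have hg : Summable (fun t : ℕ => γ ^ (t + 1)) := by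
    simpa [pow_succ] using (summable_geometric_of_lt_one hγ0.le hγ1).mul_right γ
  refine Summable.of_nonneg_of_le (fun t => ?_) (fun t => ?_) hg
  · exact mul_nonneg (pow_nonneg hγ0.le _) ((stateDist_prob τ ι π hτ hι _).1 s)
  · calc γ ^ (t + 1) * stateDist τ ι π (t + k) s ≤ γ ^ (t + 1) * 1 := by
          exact mul_le_mul_of_nonneg_left (stateDist_le_one τ ι π hτ hι _ s)
            (pow_nonneg hγ0.le _)
    _ = γ ^ (t + 1) := mul_one _

/-- The discounted occupancy recurrence. -/
lemma d_rec (hτ : ∀ s a, IsProbVec (τ s a)) (hι : IsProbVec ι)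
    {γ : ℝ} (hγ0 : 0 < γ) (hγ1 : γ < 1) (s' : S) :
    (∑' t : ℕ, γ ^ (t + 1) * stateDist τ ι π (t + 1) s') =
      ∑ s, (γ * ι s + γ * ∑' t : ℕ, γ ^ (t + 1) * stateDist τ ι π (t + 1) s)
        * Pmat τ π s s' := by
  have hsum : ∀ s : S, Summable (fun t => γ ^ (t + 1) * stateDist τ ι π t s) := by
    intro s; simpa using summable_aux τ ι π hτ hι hγ0 hγ1 0 s
  have step1 : (∑' t : ℕ, γ ^ (t + 1) * stateDist τ ι π (t + 1) s') =
      ∑' t : ℕ, ∑ s, (γ ^ (t + 1) * stateDist τ ι π t s) * Pmat τ π s s' := by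
    congr 1; funext t
    rw [stateDist_succ, Finset.mul_sum]
    simp [mul_assoc]
  rw [step1, Summable.tsum_finsetSum (fun s _ => (hsum s).mul_right _)]
  refine Finset.sum_congr rfl fun s _ => ?_
  rw [tsum_mul_right]
  congr 1
  rw [Summable.tsum_eq_zero_add (hsum s)]
  have h0 : γ ^ (0 + 1) * stateDist τ ι π 0 s = γ * ι s := by
    rw [stateDist_zero]; ring_nf
  rw [h0]
  congr 1
  rw [← tsum_mul_left]
  congr 1; funext t
  ring

/-- Deterministic policy from a choice function. -/
noncomputable def detPol (f : S → A) : Policy S A := by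
  classical
  exact ⟨fun s b => if b = f s then 1 else 0, by
    intro s
    constructor
    · intro b; dsimp only; split <;> norm_num
    · simp [Finset.sum_ite_eq']⟩

lemma pmat_detPol (f : S → A) (s s' : S) :
    Pmat τ (detPol f) s s' = τ s (f s) s' := by
  classical
  simp [Pmat, detPol, ite_mul]

end Aux


theorem stmt_19 {S A : Type} [Fintype S] [DecidableEq S] [Fintype A]
    [Nonempty S] [Nonempty A]
    (τ : S → A → S → ℝ) (hτ : ∀ s a, IsProbVec (τ s a))
    (ι : S → ℝ) (hι : IsProbVec ι)
    (γ : ℝ) (hγ0 : 0 < γ) (hγ1 : γ < 1)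
    (hreach : AllReachable τ ι) :
    -- there exists a controllable state iff `τ` is non-trivial
    (∃ s : S, ∃ π π' : Policy S A,
        (∑' t : ℕ, γ ^ (t + 1) * stateDist τ ι π (t + 1) s) ≠
        (∑' t : ℕ, γ ^ (t + 1) * stateDist τ ι π' (t + 1) s)) ↔
      ∃ (s : S) (a a' : A), τ s a ≠ τ s a' := by
  classical
  constructor
  · rintro ⟨s, π, π', hne⟩
    by_contra hno
    push_neg at hno
    apply hne
    have hP : Pmat τ π = Pmat τ π' := by
      obtain ⟨a₀⟩ := ‹Nonempty A›
      have key : ∀ ρ : Policy S A, Pmat τ ρ = Matrix.of fun s s' => τ s a₀ s' := by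
        intro ρ; ext u u'
        simp only [Pmat, Matrix.of_apply]
        calc ∑ a, ρ.1 u a * τ u a u' = ∑ a, ρ.1 u a * τ u a₀ u' := by
              refine Finset.sum_congr rfl fun a _ => ?_
              rw [hno u a a₀]
        _ = (∑ a, ρ.1 u a) * τ u a₀ u' := by rw [Finset.sum_mul]
        _ = τ u a₀ u' := by rw [(ρ.2 u).2, one_mul]
      rw [key π, key π']
    simp only [stateDist, hP]
  · rintro ⟨s₀, a, a', hne⟩
    by_contra hno
    push_neg at hno
    -- all occupancy measures agree
    set π₁ : Policy S A := detPol (fun _ => a) with hπ₁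
    set π₂ : Policy S A := detPol (fun s => if s = s₀ then a' else a) with hπ₂
    set d : S → ℝ := fun s => ∑' t : ℕ, γ ^ (t + 1) * stateDist τ ι π₁ (t + 1) s with hd
    have hdall : ∀ (ρ : Policy S A) (s : S),
        (∑' t : ℕ, γ ^ (t + 1) * stateDist τ ι ρ (t + 1) s) = d s := by
      intro ρ s
      by_contra hc
      exact hc (hno s ρ π₁)
    have hdnonneg : ∀ s, 0 ≤ d s := by
      intro s
      exact tsum_nonneg fun t => mul_nonneg (pow_nonneg hγ0.le _)
        ((stateDist_prob τ ι π₁ hτ hι _).1 s)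
    -- positivity at s₀
    have hpos : 0 < ι s₀ + d s₀ := by
      obtain ⟨ρ, t, ht⟩ := hreach s₀
      cases t with
      | zero =>
        rw [stateDist_zero] at ht
        exact add_pos_of_pos_of_nonneg ht (hdnonneg s₀)
      | succ u =>
        refine add_pos_of_nonneg_of_pos (hι.1 s₀) ?_
        rw [← hdall ρ s₀]
        calc (0:ℝ) < γ ^ (u + 1) * stateDist τ ι ρ (u + 1) s₀ :=
              mul_pos (pow_pos hγ0 _) ht
        _ ≤ ∑' t : ℕ, γ ^ (t + 1) * stateDist τ ι ρ (t + 1) s₀ := by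
              refine Summable.le_tsum (summable_aux τ ι ρ hτ hι hγ0 hγ1 1 s₀) u fun j _ => ?_
              exact mul_nonneg (pow_nonneg hγ0.le _)
                ((stateDist_prob τ ι ρ hτ hι _).1 s₀)
    -- recurrences for π₁ and π₂, both for d
    have hrec : ∀ ρ : Policy S A, ∀ s' : S,
        d s' = ∑ s, (γ * ι s + γ * d s) * Pmat τ ρ s s' := by
      intro ρ s'
      have := d_rec τ ι ρ hτ hι hγ0 hγ1 s'
      rw [hdall ρ s'] at this
      rw [this]
      refine Finset.sum_congr rfl fun s _ => ?_
      rw [hdall ρ s]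
    have hdiff : ∀ s' : S, τ s₀ a s' = τ s₀ a' s' := by
      intro s'
      have h1 := hrec π₁ s'
      have h2 := hrec π₂ s'
      have heq : ∑ s, (γ * ι s + γ * d s) * (Pmat τ π₁ s s' - Pmat τ π₂ s s') = 0 := by
        have : ∑ s, (γ * ι s + γ * d s) * (Pmat τ π₁ s s' - Pmat τ π₂ s s')
            = (∑ s, (γ * ι s + γ * d s) * Pmat τ π₁ s s')
              - ∑ s, (γ * ι s + γ * d s) * Pmat τ π₂ s s' := by
          rw [← Finset.sum_sub_distrib]
          refine Finset.sum_congr rfl fun s _ => ?_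
          ring
        rw [this, ← h1, ← h2, sub_self]
      rw [Finset.sum_eq_single s₀ ?_ ?_] at heq
      · have hP1 : Pmat τ π₁ s₀ s' = τ s₀ a s' := pmat_detPol τ _ s₀ s'
        have hP2 : Pmat τ π₂ s₀ s' = τ s₀ a' s' := by
          rw [hπ₂, pmat_detPol]; simp
        rw [hP1, hP2] at heq
        have hc : γ * ι s₀ + γ * d s₀ ≠ 0 := by
          have : 0 < γ * (ι s₀ + d s₀) := mul_pos hγ0 hpos
          rw [mul_add] at this
          exact ne_of_gt this
        have := mul_eq_zero.mp heq
        rcases this with h | h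
        · exact absurd h hc
        · linarith [sub_eq_zero.mp h]
      · intro s _ hs
        have hP1 : Pmat τ π₁ s s' = τ s a s' := pmat_detPol τ _ s s'
        have hP2 : Pmat τ π₂ s s' = τ s a s' := by
          rw [hπ₂, pmat_detPol]; simp [hs]
        rw [hP1, hP2, sub_self, mul_zero]
      · intro h; exact absurd (Finset.mem_univ s₀) h
    exact hne (funext hdiff)
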